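/- If G is a finite constructible reflexive graph and v is the last vertex of a dominating order, then G − v is constructible. -/
import Mathlib


structure RefGraph (V : Type*) where
  Adj : V → V → Prop
  symm : ∀ u v, Adj u v → Adj v u
  refl : ∀ v, Adj v v

/-- The sequence of cop positions when the cop starts at `c0`, plays the
(positional) strategy `S`, and the robber's positions are given by `rb`
(`rb 0` is the robber's starting vertex, chosen after seeing `c0`;
the cop's `(n+1)`-st position responds to the robber's position `rb n`). -/
def copSeq {V : Type*} (S : V → V → V) (c0 : V) (rb : ℕ → V) : ℕ → V
  | 0 => c0
  | n + 1 => S (copSeq S c0 rb n) (rb n)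

/-- A legal robber play: consecutive positions are adjacent (staying put is
allowed since graphs are reflexive). -/
def LegalPlay {V : Type*} (G : RefGraph V) (rb : ℕ → V) : Prop :=
  ∀ n, G.Adj (rb n) (rb (n + 1))

/-- The cop playing `S` from `c0` catches the robber play `rb`: at some point
cop and robber occupy the same vertex. -/
def Catches {V : Type*} (S : V → V → V) (c0 : V) (rb : ℕ → V) : Prop :=
  ∃ n, copSeq S c0 rb n = rb n ∨ copSeq S c0 rb (n + 1) = rb n

/-- `(c0, S)` is a winning strategy for the cop on `G`: all moves are legal and
every legal robber play is caught after finitely many rounds. -/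
def WinningStrat {V : Type*} (G : RefGraph V) (c0 : V) (S : V → V → V) : Prop :=
  (∀ c r, G.Adj c (S c r)) ∧ ∀ rb : ℕ → V, LegalPlay G rb → Catches S c0 rb

/-- `G` is cop-win: the cop has a winning strategy. -/
def CopWin {V : Type*} (G : RefGraph V) : Prop :=
  ∃ (c0 : V) (S : V → V → V), WinningStrat G c0 S

/-- `r` (a strict order relation) is a dominating order for `G`: every vertex `ν`
which is not minimal is dominated in `G_{≤ν}` by some earlier vertex. -/
def IsDomOrder {V : Type*} (G : RefGraph V) (r : V → V → Prop) : Prop :=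
  ∀ ν, (∃ μ, r μ ν) →
    ∃ μ, r μ ν ∧ G.Adj μ ν ∧ ∀ η, (r η ν ∨ η = ν) → G.Adj ν η → G.Adj μ η

/-- `G` is constructible: some well order of the vertex set is a dominating order. -/
def Constructible {V : Type*} (G : RefGraph V) : Prop :=
  ∃ r : V → V → Prop, IsWellOrder V r ∧ IsDomOrder G r

def RefGraph.induce {V : Type*} (G : RefGraph V) (S : Set V) : RefGraph S where
  Adj u v := G.Adj u.1 v.1
  symm _ _ h := G.symm _ _ h
  refl _ := G.refl _

/-- if `G` is a finite constructible graph and `v` is the last vertex of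
a dominating order, then `G − v` is constructible. -/
theorem constructible_delete_last {V : Type*} [Fintype V] (G : RefGraph V)
    (rel : V → V → Prop) (hwo : IsWellOrder V rel) (hdom : IsDomOrder G rel)
    (v : V) (hlast : ∀ u, u ≠ v → rel u v) :
    Constructible (G.induce {u | u ≠ v}) := by
  haveI := hwo
  refine ⟨fun a b => rel a.1 b.1, ?_, ?_⟩
  · exact (Subtype.relEmbedding rel _).isWellOrder
  · rintro ν ⟨μ', hμ'⟩
    obtain ⟨μ, hμν, hadj, hdomμ⟩ := hdom ν.1 ⟨μ'.1, hμ'⟩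
    have hμne : μ ≠ v := by
      intro h
      rw [h] at hμν
      exact absurd (_root_.trans hμν (hlast ν.1 ν.2)) (irrefl v)
    refine ⟨⟨μ, hμne⟩, hμν, hadj, ?_⟩
    rintro η hη hadjη
    refine hdomμ η.1 ?_ hadjη
    rcases hη with h | h
    · exact Or.inl h
    · exact Or.inr (congrArg Subtype.val h)
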